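/- Let g be a finite-dimensional Lie algebra over ℂ with solvable radical r, and let W be a finite-dimensional irreducible g-module (a nonzero Lie module whose only Lie submodules are 0 and W). Then every element of ⁅g, r⁆ acts as zero on W; that is, x · w = 0 for all x ∈ ⁅g, r⁆ and all w ∈ W. -/

import Mathlib

open LieAlgebra LieModule

namespace LieModule

section Radical

variable {k L M : Type*} [Field k] [CharZero k] [LieRing L] [LieAlgebra k L] [Module.Finite k L]
  [AddCommGroup M] [Module k M] [LieRingModule L M] [LieModule k L M] [Module.Finite k M]
  [IsIrreducible k L M] [IsTriangularizable k L M]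

/-- By Lie's theorem the radical has a nonzero weight space; it is a Lie submodule for all of `L`,
hence all of `M` by irreducibility. -/
lemma exists_toEnd_eq_smul_one_of_mem_radical {x : L} (hx : x ∈ radical k L) :
    ∃ c : k, toEnd k L M x = c • 1 := by
  have := nontrivial_of_isIrreducible k L M
  obtain ⟨χ, hχ⟩ := exists_nontrivial_weightSpace_of_isSolvable k (radical k L) M
  let N : LieSubmodule k L M := weightSpaceOfIsLieTower k M χ
  have : Nontrivial N := hχ
  have hN : N = ⊤ := N.eq_top_of_isIrreducible k L M
  refine ⟨χ ⟨x, hx⟩, LinearMap.ext fun m => ?_⟩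
  have hm : ∀ y : radical k L, ⁅(y : L), m⁆ = χ y • m := by
    simpa [N, weightSpaceOfIsLieTower, mem_weightSpace] using (hN ▸ LieSubmodule.mem_top m : m ∈ N)
  simpa using hm ⟨x, hx⟩

end Radical

lemma lie_top_le_ker_of_forall_exists_smul_one {R L M : Type*} [CommRing R] [LieRing L]
    [LieAlgebra R L] [AddCommGroup M] [Module R M] [LieRingModule L M] [LieModule R L M]
    (I : LieIdeal R L) (hI : ∀ x ∈ I, ∃ c : R, toEnd R L M x = c • 1) :
    ⁅(⊤ : LieIdeal R L), I⁆ ≤ LieModule.ker R L M := by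
  rw [LieSubmodule.lieIdeal_oper_eq_span, LieSubmodule.lieSpan_le]
  rintro _ ⟨y, a, rfl⟩
  obtain ⟨c, hc⟩ := hI a a.2
  have ha (m : M) : ⁅(a : L), m⁆ = c • m := by simpa using LinearMap.congr_fun hc m
  rw [SetLike.mem_coe, LieModule.mem_ker]
  intro m
  rw [lie_lie, ha, ha, lie_smul, sub_self]

end LieModule

theorem statement15 (g : Type*) [LieRing g] [LieAlgebra ℂ g] [FiniteDimensional ℂ g]
    (W : Type*) [AddCommGroup W] [Module ℂ W] [LieRingModule g W] [LieModule ℂ g W]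
    [FiniteDimensional ℂ W] [Nontrivial W]
    (hirr : ∀ N : LieSubmodule ℂ g W, N = ⊥ ∨ N = ⊤)
    (x : g) (hx : x ∈ ⁅(⊤ : LieIdeal ℂ g), LieAlgebra.radical ℂ g⁆) (w : W) :
    ⁅x, w⁆ = 0 := by
  have : IsIrreducible ℂ g W := .mk fun N hN => (hirr N).resolve_left hN
  have hker := lie_top_le_ker_of_forall_exists_smul_one (M := W) _
    (fun _ hy => exists_toEnd_eq_smul_one_of_mem_radical hy) hx
  exact (LieModule.mem_ker ℂ g W x).mp hker w
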